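/- For every kernel g of ℓ dimensions there exists a kernel g' of ℓ dimensions whose partial distance sequence is non-decreasing (D_{g'}(0) ≤ D_{g'}(1) ≤ ⋯ ≤ D_{g'}(ℓ−1)) and which satisfies ∏_{i=0}^{ℓ−1} D_{g'}(i) ≥ ∏_{i=0}^{ℓ−1} D_g(i); in particular E(g') ≥ E(g). -/

import Mathlib

/-!
Sort the partial distances by permuting input coordinates. If `D(i) > D(i+1)`, exchanging input
coordinates `i` and `i + 1` leaves `D(j)` unchanged for `j ∉ {i, i+1}`, makes the new `D(i)` at
least `min (D(i), D(i+1))` and at most `D(i+1)`, hence equal to `D(i+1)`, and makes the new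
`D(i+1)` at least `D(i)`. So the product of the partial distances does not decrease while the
sequence of partial distances decreases lexicographically; since the lexicographic order on
`Fin ℓ → ℕ` is well founded, repeated swaps end at a non-decreasing sequence.
-/

/-- The `i`-th partial distance of a kernel `g` of `ℓ` dimensions:
`D_g(i) = min { d_H(g(w•0•u), g(w•1•v)) : w ∈ {0,1}^i, u, v ∈ {0,1}^{ℓ−1−i} }`,
phrased via pairs of inputs that agree on coordinates `< i` and differ as `0`/`1`
at coordinate `i`. -/
noncomputable def partialDist {ℓ : ℕ} (g : (Fin ℓ → ZMod 2) → (Fin ℓ → ZMod 2)) (i : ℕ) : ℕ :=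
  sInf { d | ∃ x y : Fin ℓ → ZMod 2,
    (∀ j : Fin ℓ, (j : ℕ) < i → x j = y j) ∧
    (∀ j : Fin ℓ, (j : ℕ) = i → x j = 0 ∧ y j = 1) ∧
    d = hammingDist (g x) (g y) }

/-- The pairs `(w•0•u, w•1•v)` with `|w| = i` over which `partialDist g i` is minimised. -/
def IsSplitAt {ℓ : ℕ} (i : ℕ) (x y : Fin ℓ → ZMod 2) : Prop :=
  (∀ j : Fin ℓ, (j : ℕ) < i → x j = y j) ∧ (∀ j : Fin ℓ, (j : ℕ) = i → x j = 0 ∧ y j = 1)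

section PartialDist

variable {ℓ : ℕ} {g : (Fin ℓ → ZMod 2) → (Fin ℓ → ZMod 2)} {i j : ℕ}

theorem partialDist_le_hammingDist {x y : Fin ℓ → ZMod 2} (h : IsSplitAt i x y) :
    partialDist g i ≤ hammingDist (g x) (g y) :=
  Nat.sInf_le ⟨x, y, h.1, h.2, rfl⟩

theorem exists_isSplitAt_partialDist_eq (g : (Fin ℓ → ZMod 2) → (Fin ℓ → ZMod 2)) (i : ℕ) :
    ∃ x y, IsSplitAt i x y ∧ partialDist g i = hammingDist (g x) (g y) := by
  have hmem : partialDist g i ∈ _ := Nat.sInf_mem ⟨_, 0, fun j => if (j : ℕ) = i then 1 else 0,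
    fun j hj => by simp [hj.ne], fun j hj => by simp [hj], rfl⟩
  obtain ⟨x, y, hagree, hsplit, hd⟩ := hmem
  exact ⟨x, y, ⟨hagree, hsplit⟩, hd⟩

theorem le_partialDist {n : ℕ} (h : ∀ x y, IsSplitAt i x y → n ≤ hammingDist (g x) (g y)) :
    n ≤ partialDist g i := by
  obtain ⟨x, y, hxy, hd⟩ := exists_isSplitAt_partialDist_eq g i
  exact hd ▸ h x y hxy

theorem partialDist_le_partialDist_comp {φ : (Fin ℓ → ZMod 2) → (Fin ℓ → ZMod 2)}
    (hφ : ∀ x y, IsSplitAt i x y → IsSplitAt j (φ x) (φ y)) :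
    partialDist g j ≤ partialDist (g ∘ φ) i :=
  le_partialDist fun _ _ hxy => partialDist_le_hammingDist (hφ _ _ hxy)

end PartialDist

section AdjSwap

variable {ℓ i : ℕ} (hi : i + 1 < ℓ)

def adjSwap : Equiv.Perm (Fin ℓ) := Equiv.swap ⟨i, by omega⟩ ⟨i + 1, hi⟩

theorem val_adjSwap (k : Fin ℓ) : (adjSwap hi k : ℕ) = Equiv.swap i (i + 1) (k : ℕ) := by
  simp only [adjSwap, Equiv.swap_apply_def, Fin.ext_iff]
  split_ifs <;> rfl

theorem comp_adjSwap_involutive : Function.Involutive fun x : Fin ℓ → ZMod 2 => x ∘ adjSwap hi :=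
  fun x => funext fun k => congrArg x (Equiv.swap_apply_self _ _ k)

def swapInputs (g : (Fin ℓ → ZMod 2) → (Fin ℓ → ZMod 2)) : (Fin ℓ → ZMod 2) → (Fin ℓ → ZMod 2) :=
  g ∘ (· ∘ adjSwap hi)

variable {hi} {j : ℕ} {x y : Fin ℓ → ZMod 2}

theorem IsSplitAt.comp_adjSwap_of_ne (hji : j ≠ i) (hji' : j ≠ i + 1) (h : IsSplitAt j x y) :
    IsSplitAt j (x ∘ adjSwap hi) (y ∘ adjSwap hi) := by
  refine ⟨fun k hk => h.1 _ ?_, fun k hk => h.2 _ ?_⟩ <;>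
  · rw [val_adjSwap, Equiv.swap_apply_def]
    split_ifs <;> omega

theorem IsSplitAt.comp_adjSwap_of_succ (h : IsSplitAt (i + 1) x y) :
    IsSplitAt i (x ∘ adjSwap hi) (y ∘ adjSwap hi) := by
  refine ⟨fun k hk => h.1 _ ?_, fun k hk => h.2 _ ?_⟩ <;>
  · rw [val_adjSwap, Equiv.swap_apply_def]
    split_ifs <;> omega

/-- Coordinate `i` of the swapped pair is the old coordinate `i + 1`: either it agrees, or it is
`0`/`1` in one order or the other. -/
theorem IsSplitAt.comp_adjSwap (h : IsSplitAt i x y) :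
    IsSplitAt i (x ∘ adjSwap hi) (y ∘ adjSwap hi) ∨ IsSplitAt i (y ∘ adjSwap hi) (x ∘ adjSwap hi) ∨
      IsSplitAt (i + 1) (x ∘ adjSwap hi) (y ∘ adjSwap hi) := by
  have agree : ∀ k : Fin ℓ, (k : ℕ) < i → x (adjSwap hi k) = y (adjSwap hi k) := fun k hk =>
    h.1 _ (by rw [val_adjSwap, Equiv.swap_apply_def]; split_ifs <;> omega)
  have at_i : ∀ k : Fin ℓ, (k : ℕ) = i → adjSwap hi k = ⟨i + 1, hi⟩ := fun k hk =>
    Fin.ext (by rw [val_adjSwap, hk, Equiv.swap_apply_left])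
  have at_succ : ∀ k : Fin ℓ, (k : ℕ) = i + 1 → x (adjSwap hi k) = 0 ∧ y (adjSwap hi k) = 1 :=
    fun k hk => h.2 _ (by rw [val_adjSwap, hk, Equiv.swap_apply_right])
  have two : ∀ a : ZMod 2, a = 0 ∨ a = 1 := by decide
  by_cases hsame : x ⟨i + 1, hi⟩ = y ⟨i + 1, hi⟩
  · refine Or.inr (Or.inr ⟨fun k hk => ?_, at_succ⟩)
    rcases Nat.lt_or_ge k i with hlt | hge
    · exact agree k hlt
    · simpa [at_i k (by omega)] using hsame
  rcases two (x ⟨i + 1, hi⟩) with hx | hx <;> rcases two (y ⟨i + 1, hi⟩) with hy | hy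
  · exact absurd (hx.trans hy.symm) hsame
  · exact Or.inl ⟨agree, fun k hk => by simp [at_i k hk, hx, hy]⟩
  · exact Or.inr (Or.inl ⟨fun k hk => (agree k hk).symm, fun k hk => by simp [at_i k hk, hx, hy]⟩)
  · exact absurd (hx.trans hy.symm) hsame

variable (g : (Fin ℓ → ZMod 2) → (Fin ℓ → ZMod 2))

theorem swapInputs_swapInputs : swapInputs hi (swapInputs hi g) = g :=
  funext fun x => congrArg g (comp_adjSwap_involutive hi x)

theorem partialDist_swapInputs_of_ne (hji : j ≠ i) (hji' : j ≠ i + 1) :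
    partialDist (swapInputs hi g) j = partialDist g j := by
  have key : ∀ g : (Fin ℓ → ZMod 2) → (Fin ℓ → ZMod 2),
      partialDist g j ≤ partialDist (swapInputs hi g) j := fun _ =>
    partialDist_le_partialDist_comp fun _ _ h => h.comp_adjSwap_of_ne hji hji'
  refine le_antisymm ?_ (key g)
  simpa only [swapInputs_swapInputs] using key (swapInputs hi g)

theorem partialDist_le_partialDist_swapInputs_succ :
    partialDist g i ≤ partialDist (swapInputs hi g) (i + 1) :=
  partialDist_le_partialDist_comp fun _ _ h => h.comp_adjSwap_of_succ

theorem partialDist_swapInputs_le_succ :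
    partialDist (swapInputs hi g) i ≤ partialDist g (i + 1) := by
  simpa only [swapInputs_swapInputs] using
    partialDist_le_partialDist_swapInputs_succ (hi := hi) (swapInputs hi g)

theorem min_le_partialDist_swapInputs :
    min (partialDist g i) (partialDist g (i + 1)) ≤ partialDist (swapInputs hi g) i := by
  refine le_partialDist fun x y hxy => ?_
  rcases hxy.comp_adjSwap (hi := hi) with h | h | h
  · exact (min_le_left _ _).trans (partialDist_le_hammingDist h)
  · exact (min_le_left _ _).trans ((partialDist_le_hammingDist h).trans_eq (hammingDist_comm _ _))
  · exact (min_le_right _ _).trans (partialDist_le_hammingDist h)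

variable {g}

theorem partialDist_swap_le_partialDist_swapInputs
    (hle : partialDist g (i + 1) ≤ partialDist g i) (j : ℕ) :
    partialDist g (Equiv.swap i (i + 1) j) ≤ partialDist (swapInputs hi g) j := by
  rcases eq_or_ne j i with rfl | hji
  · simpa [min_eq_right hle] using min_le_partialDist_swapInputs (hi := hi) g
  rcases eq_or_ne j (i + 1) with rfl | hji'
  · simpa using partialDist_le_partialDist_swapInputs_succ (hi := hi) g
  rw [Equiv.swap_apply_of_ne_of_ne hji hji', partialDist_swapInputs_of_ne g hji hji']

theorem prod_partialDist_le_swapInputs (hle : partialDist g (i + 1) ≤ partialDist g i) :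
    ∏ j ∈ Finset.range ℓ, partialDist g j ≤
      ∏ j ∈ Finset.range ℓ, partialDist (swapInputs hi g) j := by
  have hsupp : {j | Equiv.swap i (i + 1) j ≠ j} ⊆ Finset.range ℓ := fun j hj =>
    Finset.mem_range.2 <| by_contra fun _ =>
      hj (Equiv.swap_apply_of_ne_of_ne (by omega) (by omega))
  rw [← (Equiv.swap i (i + 1)).prod_comp _ _ hsupp]
  exact Finset.prod_le_prod' fun j _ => partialDist_swap_le_partialDist_swapInputs hle j

theorem toLex_partialDist_swapInputs_lt (hlt : partialDist g (i + 1) < partialDist g i) :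
    toLex (fun k : Fin ℓ => partialDist (swapInputs hi g) k) <
      toLex fun k : Fin ℓ => partialDist g k :=
  ⟨⟨i, by omega⟩, fun k (hk : (k : ℕ) < i) => partialDist_swapInputs_of_ne g hk.ne (by omega),
    (partialDist_swapInputs_le_succ g).trans_lt hlt⟩

end AdjSwap

theorem exists_nondecreasing_kernel {ℓ : ℕ}
    (g : (Fin ℓ → ZMod 2) → (Fin ℓ → ZMod 2)) (hg : Function.Bijective g) :
    ∃ g' : (Fin ℓ → ZMod 2) → (Fin ℓ → ZMod 2), Function.Bijective g' ∧
      (∀ i, i + 1 < ℓ → partialDist g' i ≤ partialDist g' (i + 1)) ∧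
      ∏ i ∈ Finset.range ℓ, partialDist g i ≤ ∏ i ∈ Finset.range ℓ, partialDist g' i := by
  induction g using (InvImage.wf (fun g => toLex fun k : Fin ℓ => partialDist g k)
    wellFounded_lt).induction with
  | _ g ih =>
  by_cases hmono : ∀ i, i + 1 < ℓ → partialDist g i ≤ partialDist g (i + 1)
  · exact ⟨g, hg, hmono, le_rfl⟩
  push Not at hmono
  obtain ⟨i, hi, hlt⟩ := hmono
  obtain ⟨g', hg', hmono', hprod⟩ := ih (swapInputs hi g) (toLex_partialDist_swapInputs_lt hlt)
    (hg.comp (comp_adjSwap_involutive hi).bijective)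
  exact ⟨g', hg', hmono', (prod_partialDist_le_swapInputs hlt.le).trans hprod⟩
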